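/- In the setting of the Grobman-Hartman theorem with nonuniform $(h,k,\mu,\nu)$-dichotomy, Lipschitz perturbation constant $\gamma$ satisfying $K\gamma(1/|a|+1/b)<1$, and bound constant $\alpha$, the operator $J$ defined on the space $\Omega_3 = \{z:\mathbb{R}\to X \text{ continuous}: \sup_t\|z(t)\|\le K\alpha(1/|a|+1/b)\}$ by $(Jz)(t)=\int_{-\infty}^t T(t,\tau)P(\tau)f(\tau,Y(\tau)+z(\tau))d\tau - \int_t^\infty T(t,\tau)Q(\tau)f(\tau,Y(\tau)+z(\tau))d\tau$ (for a fixed solution $Y$ of the linear system) maps $\Omega_3$ into itself and is a contraction with constant $K\gamma(1/|a|+1/b)$; hence it has a unique fixed point $l\in\Omega_3$. -/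

import Mathlib

/-!
With `ρ τ = min (h' τ / h τ · μ |τ|^(-ε)) (k' τ / k τ · ν |τ|^(-ε))`, a forcing term with
`‖w τ‖ ≤ c ρ τ` meets the dichotomy bounds so that the factors `μ |τ|^ε` and `μ |τ|^(-ε)`
(resp. `ν`) cancel: the stable integrand is bounded by `K c (h τ / h t)^(-a) h' τ / h τ`, whose
integral over `(-∞, t]` is `1/|a|` because `(h τ / h t)^(-a) / (-a)` is an antiderivative, and
symmetrically the unstable one integrates to `1/b`. With `c = α` this shows that `J` maps the
ball `Ω₃` into itself; with `c = γ sup ‖z₁ - z₂‖`, applied to the difference of the forcing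
terms, it gives the contraction estimate. Dominated convergence makes `J z` continuous, so `J` is
a contraction of a closed ball of bounded continuous functions and Banach's fixed-point theorem
applies.
-/

open Filter Set MeasureTheory Topology

theorem integrableOn_Iic_deriv_of_nonneg {g g' : ℝ → ℝ} {t : ℝ}
    (hderiv : ∀ x ∈ Iic t, HasDerivAt g (g' x) x) (g'pos : ∀ x ∈ Iic t, 0 ≤ g' x)
    (hg : Tendsto g atBot (𝓝 0)) : IntegrableOn g' (Iic t) := by
  have hcont : ContinuousOn g (Iic t) := fun x hx => (hderiv x hx).continuousAt.continuousWithinAt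
  have hint : ∀ s ≤ t, IntegrableOn g' (Ioc s t) := fun s _ =>
    intervalIntegral.integrableOn_deriv_of_nonneg (hcont.mono Icc_subset_Iic_self)
      (fun y hy => hderiv y hy.2.le) fun y hy => g'pos y hy.2.le
  refine integrableOn_Iic_of_intervalIntegral_norm_tendsto (g t) t
    (fun s => ?_) tendsto_id ?_
  · rcases le_total s t with hs | hs
    · exact hint s hs
    · simp [Ioc_eq_empty_of_le hs]
  · have hlim : Tendsto (fun s => g t - g s) atBot (𝓝 (g t)) := by
      simpa using tendsto_const_nhds.sub hg
    refine hlim.congr' ?_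
    filter_upwards [eventually_le_atBot t] with s hs
    calc g t - g s = ∫ y in s..t, g' y :=
          (intervalIntegral.integral_eq_sub_of_hasDerivAt_of_le hs
            (hcont.mono Icc_subset_Iic_self) (fun y hy => hderiv y hy.2.le)
            ((intervalIntegrable_iff_integrableOn_Ioc_of_le hs).2 (hint s hs))).symm
      _ = ∫ y in id s..t, ‖g' y‖ := intervalIntegral.integral_congr fun y hy =>
          (Real.norm_of_nonneg (g'pos y (by rw [uIcc_of_le hs] at hy; exact hy.2))).symm

theorem div_rpow_mul_logDeriv_nonneg {g g' : ℝ → ℝ} (hpos : ∀ x, 0 < g x)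
    (hnn : ∀ x, 0 ≤ g' x) (s p x : ℝ) : 0 ≤ (g x / g s) ^ p * (g' x * (g x)⁻¹) :=
  mul_nonneg (Real.rpow_nonneg (div_pos (hpos x) (hpos s)).le p)
    (mul_nonneg (hnn x) (inv_nonneg.2 (hpos x).le))

theorem hasDerivAt_div_rpow_div {g g' : ℝ → ℝ} (hpos : ∀ x, 0 < g x)
    (hd : ∀ x, HasDerivAt g (g' x) x) {s p : ℝ} (hp : p ≠ 0) (x : ℝ) :
    HasDerivAt (fun τ => (g τ / g s) ^ p / p) ((g x / g s) ^ p * (g' x * (g x)⁻¹)) x := by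
  have hx := div_pos (hpos x) (hpos s)
  refine (((hd x).div_const (g s)).rpow_const (p := p) (Or.inl hx.ne')).div_const p
    |>.congr_deriv ?_
  have hs := (hpos s).ne'
  rw [Real.rpow_sub_one hx.ne']
  field_simp

theorem tendsto_div_rpow_div_atBot {g : ℝ → ℝ} (hbot : Tendsto g atBot (𝓝 0)) {p : ℝ}
    (hp : 0 < p) (s : ℝ) : Tendsto (fun τ => (g τ / g s) ^ p / p) atBot (𝓝 0) := by
  have := ((Real.continuousAt_rpow_const 0 p (Or.inr hp.le)).tendsto.comp
    (by simpa using hbot.div_const (g s))).div_const p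
  simpa [Real.zero_rpow hp.ne'] using this

theorem integrableOn_Iic_div_rpow_mul_logDeriv {g g' : ℝ → ℝ} (hpos : ∀ x, 0 < g x)
    (hd : ∀ x, HasDerivAt g (g' x) x) (hnn : ∀ x, 0 ≤ g' x) (hbot : Tendsto g atBot (𝓝 0))
    {p : ℝ} (hp : 0 < p) (s t : ℝ) :
    IntegrableOn (fun τ => (g τ / g s) ^ p * (g' τ * (g τ)⁻¹)) (Iic t) :=
  integrableOn_Iic_deriv_of_nonneg (fun x _ => hasDerivAt_div_rpow_div hpos hd hp.ne' x)
    (fun x _ => div_rpow_mul_logDeriv_nonneg hpos hnn s p x) (tendsto_div_rpow_div_atBot hbot hp s)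

theorem integral_Iic_div_rpow_mul_logDeriv {g g' : ℝ → ℝ} (hpos : ∀ x, 0 < g x)
    (hd : ∀ x, HasDerivAt g (g' x) x) (hnn : ∀ x, 0 ≤ g' x) (hbot : Tendsto g atBot (𝓝 0))
    {p : ℝ} (hp : 0 < p) (t : ℝ) :
    ∫ τ in Iic t, (g τ / g t) ^ p * (g' τ * (g τ)⁻¹) = 1 / p := by
  rw [integral_Iic_of_hasDerivAt_of_tendsto' (fun x _ => hasDerivAt_div_rpow_div hpos hd hp.ne' x)
    (integrableOn_Iic_div_rpow_mul_logDeriv hpos hd hnn hbot hp t t)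
    (tendsto_div_rpow_div_atBot hbot hp t), div_self (hpos t).ne', Real.one_rpow, sub_zero]

theorem tendsto_div_rpow_neg_div_atTop {g : ℝ → ℝ} {s : ℝ} (htop : Tendsto g atTop atTop)
    (hs : 0 < g s) {p : ℝ} (hp : 0 < p) : Tendsto (fun τ => (g τ / g s) ^ (-p) / -p) atTop (𝓝 0) := by
  simpa using ((tendsto_rpow_neg_atTop hp).comp (htop.atTop_div_const hs)).div_const (-p)

theorem integrableOn_Ioi_div_rpow_neg_mul_logDeriv {g g' : ℝ → ℝ} (hpos : ∀ x, 0 < g x)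
    (hd : ∀ x, HasDerivAt g (g' x) x) (hnn : ∀ x, 0 ≤ g' x) (htop : Tendsto g atTop atTop)
    {p : ℝ} (hp : 0 < p) (s t : ℝ) :
    IntegrableOn (fun τ => (g τ / g s) ^ (-p) * (g' τ * (g τ)⁻¹)) (Ioi t) :=
  integrableOn_Ioi_deriv_of_nonneg'
    (fun x _ => hasDerivAt_div_rpow_div hpos hd (neg_ne_zero.2 hp.ne') x)
    (fun x _ => div_rpow_mul_logDeriv_nonneg hpos hnn s _ x)
    (tendsto_div_rpow_neg_div_atTop htop (hpos s) hp)

theorem integral_Ioi_div_rpow_neg_mul_logDeriv {g g' : ℝ → ℝ} (hpos : ∀ x, 0 < g x)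
    (hd : ∀ x, HasDerivAt g (g' x) x) (hnn : ∀ x, 0 ≤ g' x) (htop : Tendsto g atTop atTop)
    {p : ℝ} (hp : 0 < p) (t : ℝ) :
    ∫ τ in Ioi t, (g τ / g t) ^ (-p) * (g' τ * (g τ)⁻¹) = 1 / p := by
  rw [integral_Ioi_of_hasDerivAt_of_nonneg'
    (fun x _ => hasDerivAt_div_rpow_div hpos hd (neg_ne_zero.2 hp.ne') x)
    (fun x _ => div_rpow_mul_logDeriv_nonneg hpos hnn t _ x)
    (tendsto_div_rpow_neg_div_atTop htop (hpos t) hp), div_self (hpos t).ne', Real.one_rpow]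
  ring

theorem ContinuousLinearMap.norm_apply_le_of_le_mul_rpow {𝕜 E F : Type*}
    [NontriviallyNormedField 𝕜] [NormedAddCommGroup E] [NormedSpace 𝕜 E]
    [NormedAddCommGroup F] [NormedSpace 𝕜 F] {L : E →L[𝕜] F} {v : E} {B c d m ε : ℝ}
    (hm : 0 < m) (hL : ‖L‖ ≤ B * m ^ ε) (hv : ‖v‖ ≤ c * (d * m ^ (-ε))) :
    ‖L v‖ ≤ B * c * d := by
  have hmm : m ^ ε * m ^ (-ε) = 1 := by rw [← Real.rpow_add hm, add_neg_cancel, Real.rpow_zero]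
  calc ‖L v‖ ≤ ‖L‖ * ‖v‖ := L.le_opNorm v
    _ ≤ B * m ^ ε * (c * (d * m ^ (-ε))) :=
      mul_le_mul hL hv (norm_nonneg v) ((norm_nonneg L).trans hL)
    _ = B * c * d * (m ^ ε * m ^ (-ε)) := by ring
    _ = B * c * d := by rw [hmm, mul_one]

theorem continuousAt_setIntegral_of_dominated {E : Type*} [NormedAddCommGroup E]
    [NormedSpace ℝ E] {F : ℝ → ℝ → E} {S : ℝ → Set ℝ} {U : Set ℝ} {bound : ℝ → ℝ} {t₀ : ℝ}
    (hF : Continuous (Function.uncurry F)) (hS : ∀ t, MeasurableSet (S t))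
    (hS_loc : ∀ᵐ τ, ∀ᶠ t in 𝓝 t₀, τ ∈ S t ↔ τ ∈ S t₀) (hU : MeasurableSet U)
    (hSU : ∀ᶠ t in 𝓝 t₀, S t ⊆ U) (h_bound : ∀ᶠ t in 𝓝 t₀, ∀ τ ∈ S t, ‖F t τ‖ ≤ bound τ)
    (bound_integrable : IntegrableOn bound U) :
    ContinuousAt (fun t => ∫ τ in S t, F t τ) t₀ := by
  simp_rw [← integral_indicator (hS _)]
  refine continuousAt_of_dominated (bound := U.indicator fun τ => |bound τ|)
    (Eventually.of_forall fun t => ((hF.uncurry_left t).aestronglyMeasurable).indicator (hS t))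
    ?_ ((integrable_indicator_iff hU).2 bound_integrable.abs) ?_
  · filter_upwards [hSU, h_bound] with t hSUt hbt
    refine ae_of_all _ fun τ => ?_
    by_cases hτ : τ ∈ S t
    · rw [indicator_of_mem hτ, indicator_of_mem (hSUt hτ)]
      exact (hbt τ hτ).trans (le_abs_self _)
    · rw [indicator_of_notMem hτ, norm_zero]
      exact indicator_nonneg (fun τ _ => abs_nonneg (bound τ)) τ
  · filter_upwards [hS_loc] with τ hτ
    by_cases hτ₀ : τ ∈ S t₀
    · refine ((hF.uncurry_right τ).continuousAt).congr ?_
      filter_upwards [hτ] with t ht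
      rw [indicator_of_mem (ht.2 hτ₀)]
    · refine continuousAt_const.congr (f := fun _ => (0 : E)) ?_
      filter_upwards [hτ] with t ht
      rw [indicator_of_notMem (mt ht.1 hτ₀)]

theorem ae_eventually_mem_Iic_iff (t₀ : ℝ) :
    ∀ᵐ τ, ∀ᶠ t in 𝓝 t₀, τ ∈ Iic t ↔ τ ∈ Iic t₀ := by
  filter_upwards [volume.ae_ne t₀] with τ hτ
  rcases hτ.lt_or_gt with hlt | hgt
  · filter_upwards [lt_mem_nhds hlt] with t ht
    exact iff_of_true ht.le hlt.le
  · filter_upwards [gt_mem_nhds hgt] with t ht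
    exact iff_of_false (not_le.2 ht) (not_le.2 hgt)

theorem ae_eventually_mem_Ioi_iff (t₀ : ℝ) :
    ∀ᵐ τ, ∀ᶠ t in 𝓝 t₀, τ ∈ Ioi t ↔ τ ∈ Ioi t₀ := by
  filter_upwards [volume.ae_ne t₀] with τ hτ
  rcases hτ.lt_or_gt with hlt | hgt
  · filter_upwards [lt_mem_nhds hlt] with t ht
    exact iff_of_false (not_lt.2 ht.le) (not_lt.2 hlt.le)
  · filter_upwards [gt_mem_nhds hgt] with t ht
    exact iff_of_true ht hgt

open BoundedContinuousFunction in
theorem exists_unique_fixedPoint_of_contraction_on_closedBall {α X : Type*} [TopologicalSpace α]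
    [NormedAddCommGroup X] [CompleteSpace X] {J : (α → X) → α → X} {R q : ℝ}
    (hR : 0 ≤ R) (hq₀ : 0 ≤ q) (hq₁ : q < 1)
    (hJ_cont : ∀ z, Continuous z → (∀ t, ‖z t‖ ≤ R) → Continuous (J z))
    (hJ_maps : ∀ z, Continuous z → (∀ t, ‖z t‖ ≤ R) → ∀ t, ‖J z t‖ ≤ R)
    (hJ_contr : ∀ z₁ z₂, Continuous z₁ → Continuous z₂ → (∀ t, ‖z₁ t‖ ≤ R) →
      (∀ t, ‖z₂ t‖ ≤ R) → ∀ C, (∀ t, ‖z₁ t - z₂ t‖ ≤ C) → ∀ t, ‖J z₁ t - J z₂ t‖ ≤ q * C) :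
    ∃ l : α → X, Continuous l ∧ (∀ t, ‖l t‖ ≤ R) ∧ (∀ t, J l t = l t) ∧
      ∀ l' : α → X, Continuous l' → (∀ t, ‖l' t‖ ≤ R) → (∀ t, J l' t = l' t) → l' = l := by
  set S := Metric.closedBall (0 : α →ᵇ X) R
  have mem_S {g : α →ᵇ X} : g ∈ S ↔ ∀ t, ‖g t‖ ≤ R := by
    rw [mem_closedBall_zero_iff, norm_le hR]
  have : CompleteSpace S := Metric.isClosed_closedBall.completeSpace_coe
  have : Nonempty S := ⟨⟨0, Metric.mem_closedBall_self hR⟩⟩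
  let toS (z : α → X) (hz : Continuous z) (hzR : ∀ t, ‖z t‖ ≤ R) : S :=
    ⟨ofNormedAddCommGroup z hz R hzR, mem_S.2 hzR⟩
  let Φ : S → S := fun g =>
    toS (J g) (hJ_cont g g.1.continuous (mem_S.1 g.2)) (hJ_maps g g.1.continuous (mem_S.1 g.2))
  have hΦ : ContractingWith ⟨q, hq₀⟩ Φ := by
    refine ⟨hq₁, LipschitzWith.of_dist_le_mul fun g₁ g₂ => ?_⟩
    refine (dist_le (mul_nonneg hq₀ dist_nonneg)).2 fun t => ?_
    rw [dist_eq_norm]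
    exact hJ_contr g₁ g₂ g₁.1.continuous g₂.1.continuous (mem_S.1 g₁.2) (mem_S.1 g₂.2) _
      (fun t => (dist_eq_norm _ _).symm.trans_le (dist_coe_le_dist t)) t
  set l := ContractingWith.fixedPoint Φ hΦ
  refine ⟨l.1, l.1.continuous, mem_S.1 l.2, fun t => ?_, fun l' hl' hl'R hl'J => ?_⟩
  · exact congrArg (fun g : S => g.1 t) hΦ.fixedPoint_isFixedPt
  · have hfix : Function.IsFixedPt Φ (toS l' hl' hl'R) :=
      Subtype.ext (BoundedContinuousFunction.ext hl'J)
    exact congrArg (fun g : S => ⇑g.1) (hΦ.fixedPoint_unique hfix)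

/-- The estimates of a nonuniform `(h, k, μ, ν)`-dichotomy, together with the regularity of the
evolution family, the projections and the growth rates on which the Lyapunov–Perron integrals
depend. -/
structure NonuniformDichotomy {X : Type*} [NormedAddCommGroup X] [NormedSpace ℝ X]
    (T : ℝ → ℝ → X →L[ℝ] X) (P : ℝ → X →L[ℝ] X) (h h' k k' μ ν : ℝ → ℝ) (K a b ε : ℝ) :
    Prop where
  continuous_evolution : Continuous fun p : ℝ × ℝ => T p.1 p.2
  continuous_proj : Continuous P
  norm_stable_le : ∀ t s, s ≤ t → ‖T t s ∘L P s‖ ≤ K * (h t / h s) ^ a * μ |s| ^ ε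
  norm_unstable_le : ∀ t s, t ≤ s →
    ‖T t s ∘L (ContinuousLinearMap.id ℝ X - P s)‖ ≤ K * (k s / k t) ^ (-b) * ν |s| ^ ε
  K_nonneg : 0 ≤ K
  a_neg : a < 0
  b_pos : 0 < b
  h_pos : ∀ t, 0 < h t
  h_mono : Monotone h
  hasDerivAt_h : ∀ t, HasDerivAt h (h' t) t
  h'_nonneg : ∀ t, 0 ≤ h' t
  tendsto_h_atBot : Tendsto h atBot (𝓝 0)
  k_pos : ∀ t, 0 < k t
  k_mono : Monotone k
  hasDerivAt_k : ∀ t, HasDerivAt k (k' t) t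
  k'_nonneg : ∀ t, 0 ≤ k' t
  tendsto_k_atTop : Tendsto k atTop atTop
  μ_pos : ∀ t, 0 < μ t
  ν_pos : ∀ t, 0 < ν t

noncomputable def greenIntegral {X : Type*} [NormedAddCommGroup X] [NormedSpace ℝ X]
    (T : ℝ → ℝ → X →L[ℝ] X) (P : ℝ → X →L[ℝ] X) (w : ℝ → X) (t : ℝ) : X :=
  (∫ τ in Iic t, (T t τ ∘L P τ) (w τ)) -
    ∫ τ in Ioi t, (T t τ ∘L (ContinuousLinearMap.id ℝ X - P τ)) (w τ)

namespace NonuniformDichotomy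

variable {X : Type*} [NormedAddCommGroup X] [NormedSpace ℝ X]
  {T : ℝ → ℝ → X →L[ℝ] X} {P : ℝ → X →L[ℝ] X} {h h' k k' μ ν : ℝ → ℝ} {K a b ε : ℝ}
  (hD : NonuniformDichotomy T P h h' k k' μ ν K a b ε) {w : ℝ → X} {c : ℝ}
include hD

theorem integrableOn_stableWeight (s t : ℝ) :
    IntegrableOn (fun τ => (h τ / h s) ^ (-a) * (h' τ * (h τ)⁻¹)) (Iic t) :=
  integrableOn_Iic_div_rpow_mul_logDeriv hD.h_pos hD.hasDerivAt_h hD.h'_nonneg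
    hD.tendsto_h_atBot (neg_pos.2 hD.a_neg) s t

theorem integral_stableWeight (t : ℝ) :
    ∫ τ in Iic t, (h τ / h t) ^ (-a) * (h' τ * (h τ)⁻¹) = 1 / |a| := by
  rw [integral_Iic_div_rpow_mul_logDeriv hD.h_pos hD.hasDerivAt_h hD.h'_nonneg
    hD.tendsto_h_atBot (neg_pos.2 hD.a_neg), abs_of_neg hD.a_neg]

theorem integrableOn_unstableWeight (s t : ℝ) :
    IntegrableOn (fun τ => (k τ / k s) ^ (-b) * (k' τ * (k τ)⁻¹)) (Ioi t) :=
  integrableOn_Ioi_div_rpow_neg_mul_logDeriv hD.k_pos hD.hasDerivAt_k hD.k'_nonneg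
    hD.tendsto_k_atTop hD.b_pos s t

theorem integral_unstableWeight (t : ℝ) :
    ∫ τ in Ioi t, (k τ / k t) ^ (-b) * (k' τ * (k τ)⁻¹) = 1 / b :=
  integral_Ioi_div_rpow_neg_mul_logDeriv hD.k_pos hD.hasDerivAt_k hD.k'_nonneg
    hD.tendsto_k_atTop hD.b_pos t

theorem continuous_uncurry_apply {Q : ℝ → X →L[ℝ] X} (hQ : Continuous Q) (hw : Continuous w) :
    Continuous (Function.uncurry fun t τ => (T t τ ∘L Q τ) (w τ)) :=
  hD.continuous_evolution.clm_apply ((hQ.comp continuous_snd).clm_apply (hw.comp continuous_snd))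

theorem norm_stable_apply_le {t s : ℝ} (hst : s ≤ t) {v : X}
    (hv : ‖v‖ ≤ c * (h' s * (h s)⁻¹ * μ |s| ^ (-ε))) :
    ‖(T t s ∘L P s) v‖ ≤ K * c * ((h s / h t) ^ (-a) * (h' s * (h s)⁻¹)) := by
  have hflip : (h t / h s) ^ a = (h s / h t) ^ (-a) := by
    rw [Real.rpow_neg (div_pos (hD.h_pos s) (hD.h_pos t)).le, ← Real.inv_rpow
      (div_pos (hD.h_pos s) (hD.h_pos t)).le, inv_div]
  have := ContinuousLinearMap.norm_apply_le_of_le_mul_rpow (hD.μ_pos |s|)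
    (hD.norm_stable_le t s hst) hv
  rw [hflip] at this
  linarith

theorem norm_unstable_apply_le {t s : ℝ} (hts : t ≤ s) {v : X}
    (hv : ‖v‖ ≤ c * (k' s * (k s)⁻¹ * ν |s| ^ (-ε))) :
    ‖(T t s ∘L (ContinuousLinearMap.id ℝ X - P s)) v‖ ≤
      K * c * ((k s / k t) ^ (-b) * (k' s * (k s)⁻¹)) := by
  have := ContinuousLinearMap.norm_apply_le_of_le_mul_rpow (hD.ν_pos |s|)
    (hD.norm_unstable_le t s hts) hv
  linarith

theorem integrableOn_stable (hw : Continuous w)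
    (hwb : ∀ τ, ‖w τ‖ ≤ c * (h' τ * (h τ)⁻¹ * μ |τ| ^ (-ε))) (t : ℝ) :
    IntegrableOn (fun τ => (T t τ ∘L P τ) (w τ)) (Iic t) :=
  Integrable.mono' ((hD.integrableOn_stableWeight t t).const_mul (K * c))
    ((hD.continuous_uncurry_apply hD.continuous_proj hw).uncurry_left t).aestronglyMeasurable
    ((ae_restrict_iff' measurableSet_Iic).2 (ae_of_all _ fun τ hτ =>
      hD.norm_stable_apply_le hτ (hwb τ)))

theorem norm_integral_stable_le (hwb : ∀ τ, ‖w τ‖ ≤ c * (h' τ * (h τ)⁻¹ * μ |τ| ^ (-ε)))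
    (t : ℝ) : ‖∫ τ in Iic t, (T t τ ∘L P τ) (w τ)‖ ≤ K * c / |a| := by
  have := norm_integral_le_of_norm_le ((hD.integrableOn_stableWeight t t).const_mul (K * c))
    ((ae_restrict_iff' measurableSet_Iic).2 (ae_of_all _ fun τ hτ =>
      hD.norm_stable_apply_le hτ (hwb τ)))
  rwa [integral_const_mul, hD.integral_stableWeight, ← div_eq_mul_one_div] at this

theorem integrableOn_unstable (hw : Continuous w)
    (hwb : ∀ τ, ‖w τ‖ ≤ c * (k' τ * (k τ)⁻¹ * ν |τ| ^ (-ε))) (t : ℝ) :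
    IntegrableOn (fun τ => (T t τ ∘L (ContinuousLinearMap.id ℝ X - P τ)) (w τ)) (Ioi t) :=
  Integrable.mono' ((hD.integrableOn_unstableWeight t t).const_mul (K * c))
    ((hD.continuous_uncurry_apply (continuous_const.sub hD.continuous_proj) hw).uncurry_left
      t).aestronglyMeasurable
    ((ae_restrict_iff' measurableSet_Ioi).2 (ae_of_all _ fun τ hτ =>
      hD.norm_unstable_apply_le (le_of_lt hτ) (hwb τ)))

theorem norm_integral_unstable_le (hwb : ∀ τ, ‖w τ‖ ≤ c * (k' τ * (k τ)⁻¹ * ν |τ| ^ (-ε)))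
    (t : ℝ) :
    ‖∫ τ in Ioi t, (T t τ ∘L (ContinuousLinearMap.id ℝ X - P τ)) (w τ)‖ ≤ K * c / b := by
  have := norm_integral_le_of_norm_le ((hD.integrableOn_unstableWeight t t).const_mul (K * c))
    ((ae_restrict_iff' measurableSet_Ioi).2 (ae_of_all _ fun τ hτ =>
      hD.norm_unstable_apply_le (le_of_lt hτ) (hwb τ)))
  rwa [integral_const_mul, hD.integral_unstableWeight, ← div_eq_mul_one_div] at this

theorem continuous_integral_stable (hw : Continuous w) (hc : 0 ≤ c)
    (hwb : ∀ τ, ‖w τ‖ ≤ c * (h' τ * (h τ)⁻¹ * μ |τ| ^ (-ε))) :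
    Continuous fun t => ∫ τ in Iic t, (T t τ ∘L P τ) (w τ) := by
  refine continuous_iff_continuousAt.2 fun t₀ => continuousAt_setIntegral_of_dominated
    (hD.continuous_uncurry_apply hD.continuous_proj hw) (fun _ => measurableSet_Iic)
    (ae_eventually_mem_Iic_iff t₀) measurableSet_Iic
    (U := Iic (t₀ + 1)) (bound := fun τ => K * c * ((h τ / h (t₀ - 1)) ^ (-a) * (h' τ * (h τ)⁻¹)))
    ?_ ?_ ((hD.integrableOn_stableWeight _ _).const_mul (K * c))
  · filter_upwards [gt_mem_nhds (lt_add_one t₀)] with t ht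
    exact Iic_subset_Iic.2 ht.le
  · filter_upwards [lt_mem_nhds (sub_one_lt t₀)] with t ht τ hτ
    refine (hD.norm_stable_apply_le hτ (hwb τ)).trans ?_
    have hpow : (h τ / h t) ^ (-a) ≤ (h τ / h (t₀ - 1)) ^ (-a) :=
      Real.rpow_le_rpow (div_pos (hD.h_pos τ) (hD.h_pos t)).le
        (div_le_div_of_nonneg_left (hD.h_pos τ).le (hD.h_pos _) (hD.h_mono ht.le))
        (neg_nonneg.2 hD.a_neg.le)
    exact mul_le_mul_of_nonneg_left (mul_le_mul_of_nonneg_right hpow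
      (mul_nonneg (hD.h'_nonneg τ) (inv_nonneg.2 (hD.h_pos τ).le))) (mul_nonneg hD.K_nonneg hc)

theorem continuous_integral_unstable (hw : Continuous w) (hc : 0 ≤ c)
    (hwb : ∀ τ, ‖w τ‖ ≤ c * (k' τ * (k τ)⁻¹ * ν |τ| ^ (-ε))) :
    Continuous fun t => ∫ τ in Ioi t, (T t τ ∘L (ContinuousLinearMap.id ℝ X - P τ)) (w τ) := by
  refine continuous_iff_continuousAt.2 fun t₀ => continuousAt_setIntegral_of_dominated
    (hD.continuous_uncurry_apply (continuous_const.sub hD.continuous_proj) hw)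
    (fun _ => measurableSet_Ioi) (ae_eventually_mem_Ioi_iff t₀) measurableSet_Ioi
    (U := Ioi (t₀ - 1)) (bound := fun τ => K * c * ((k τ / k (t₀ + 1)) ^ (-b) * (k' τ * (k τ)⁻¹)))
    ?_ ?_ ((hD.integrableOn_unstableWeight _ _).const_mul (K * c))
  · filter_upwards [lt_mem_nhds (sub_one_lt t₀)] with t ht
    exact Ioi_subset_Ioi ht.le
  · filter_upwards [gt_mem_nhds (lt_add_one t₀)] with t ht τ hτ
    refine (hD.norm_unstable_apply_le (le_of_lt hτ) (hwb τ)).trans ?_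
    have hpow : (k τ / k t) ^ (-b) ≤ (k τ / k (t₀ + 1)) ^ (-b) :=
      Real.rpow_le_rpow_of_nonpos (div_pos (hD.k_pos τ) (hD.k_pos _))
        (div_le_div_of_nonneg_left (hD.k_pos τ).le (hD.k_pos t) (hD.k_mono ht.le))
        (neg_nonpos.2 hD.b_pos.le)
    exact mul_le_mul_of_nonneg_left (mul_le_mul_of_nonneg_right hpow
      (mul_nonneg (hD.k'_nonneg τ) (inv_nonneg.2 (hD.k_pos τ).le))) (mul_nonneg hD.K_nonneg hc)

section Green

variable (hc : 0 ≤ c) (hwb : ∀ τ, ‖w τ‖ ≤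
  c * min (h' τ * (h τ)⁻¹ * μ |τ| ^ (-ε)) (k' τ * (k τ)⁻¹ * ν |τ| ^ (-ε)))
include hc hwb

theorem norm_greenIntegral_le (t : ℝ) :
    ‖greenIntegral T P w t‖ ≤ K * c * (1 / |a| + 1 / b) := by
  have hsplit τ := le_min_iff.1 ((hwb τ).trans_eq (mul_min_of_nonneg _ _ hc))
  calc ‖greenIntegral T P w t‖ ≤ K * c / |a| + K * c / b :=
        (norm_sub_le _ _).trans (add_le_add (hD.norm_integral_stable_le (fun τ => (hsplit τ).1) t)
          (hD.norm_integral_unstable_le (fun τ => (hsplit τ).2) t))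
    _ = K * c * (1 / |a| + 1 / b) := by ring

theorem continuous_greenIntegral (hw : Continuous w) : Continuous (greenIntegral T P w) := by
  have hsplit τ := le_min_iff.1 ((hwb τ).trans_eq (mul_min_of_nonneg _ _ hc))
  exact (hD.continuous_integral_stable hw hc fun τ => (hsplit τ).1).sub
    (hD.continuous_integral_unstable hw hc fun τ => (hsplit τ).2)

theorem greenIntegral_sub {v : ℝ → X} (hv : Continuous v) (hw : Continuous w) (hvb : ∀ τ, ‖v τ‖ ≤
      c * min (h' τ * (h τ)⁻¹ * μ |τ| ^ (-ε)) (k' τ * (k τ)⁻¹ * ν |τ| ^ (-ε))) (t : ℝ) :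
    greenIntegral T P (v - w) t = greenIntegral T P v t - greenIntegral T P w t := by
  have hsplit τ := le_min_iff.1 ((hwb τ).trans_eq (mul_min_of_nonneg _ _ hc))
  have hsplit' τ := le_min_iff.1 ((hvb τ).trans_eq (mul_min_of_nonneg _ _ hc))
  simp only [greenIntegral, Pi.sub_apply, map_sub]
  rw [integral_sub (hD.integrableOn_stable hv (fun τ => (hsplit' τ).1) t)
      (hD.integrableOn_stable hw (fun τ => (hsplit τ).1) t),
    integral_sub (hD.integrableOn_unstable hv (fun τ => (hsplit' τ).2) t)
      (hD.integrableOn_unstable hw (fun τ => (hsplit τ).2) t)]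
  abel

end Green

end NonuniformDichotomy

theorem stmt_13_general {X : Type*} [NormedAddCommGroup X] [NormedSpace ℝ X] [CompleteSpace X]
    (h k μ ν : ℝ → ℝ) (h' k' : ℝ → ℝ)
    (hmono : Monotone h) (hpos : ∀ t, 0 < h t)
    (hbot : Tendsto h atBot (nhds 0))
    (kmono : Monotone k) (kpos : ∀ t, 0 < k t)
    (ktop : Tendsto k atTop atTop)
    (μpos : ∀ t, 0 < μ t)
    (νpos : ∀ t, 0 < ν t)
    (hd : ∀ t, HasDerivAt h (h' t) t) (kd : ∀ t, HasDerivAt k (k' t) t)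
    (hnn : ∀ t, 0 ≤ h' t) (knn : ∀ t, 0 ≤ k' t)
    (K a b ε α γ : ℝ) (ha : a < 0) (hb : 0 < b) (hK : 0 < K)
    (hα : 0 < α) (hγ : 0 < γ)
    (A : ℝ → X →L[ℝ] X)
    (T : ℝ → ℝ → X →L[ℝ] X)
    (hTcont : Continuous fun p : ℝ × ℝ => T p.1 p.2)
    (P : ℝ → X →L[ℝ] X) (hPcont : Continuous P)
    (hbound₁ : ∀ t s, s ≤ t →
      ‖T t s ∘L P s‖ ≤ K * (h t / h s) ^ a * μ |s| ^ ε)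
    (hbound₂ : ∀ t s, t ≤ s →
      ‖T t s ∘L (ContinuousLinearMap.id ℝ X - P s)‖ ≤ K * (k s / k t) ^ (-b) * ν |s| ^ ε)
    (f : ℝ → X → X) (hfcont : Continuous fun p : ℝ × X => f p.1 p.2)
    (hfbd : ∀ t x, ‖f t x‖ ≤
      α * min (h' t * (h t)⁻¹ * μ |t| ^ (-ε)) (k' t * (k t)⁻¹ * ν |t| ^ (-ε)))
    (hflip : ∀ t x₁ x₂, ‖f t x₁ - f t x₂‖ ≤
      γ * min (h' t * (h t)⁻¹ * μ |t| ^ (-ε)) (k' t * (k t)⁻¹ * ν |t| ^ (-ε)) * ‖x₁ - x₂‖)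
    (hsmall : K * γ * (1 / |a| + 1 / b) < 1)
    (Ys : ℝ → X) (hYs : ∀ t, HasDerivAt Ys (A t (Ys t)) t)
    (J : (ℝ → X) → ℝ → X)
    (hJ : ∀ (z : ℝ → X) (t : ℝ),
      J z t = (∫ τ in Set.Iic t, (T t τ ∘L P τ) (f τ (Ys τ + z τ)))
        - ∫ τ in Set.Ioi t, (T t τ ∘L (ContinuousLinearMap.id ℝ X - P τ)) (f τ (Ys τ + z τ))) :
    -- `J` maps `Ω₃` into itself
    (∀ z : ℝ → X, Continuous z → (∀ t, ‖z t‖ ≤ K * α * (1 / |a| + 1 / b)) →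
      ∀ t, ‖J z t‖ ≤ K * α * (1 / |a| + 1 / b)) ∧
    -- `J` is a contraction with constant `Kγ(1/|a|+1/b)` in the sup norm
    (∀ z₁ z₂ : ℝ → X, Continuous z₁ → Continuous z₂ →
      (∀ t, ‖z₁ t‖ ≤ K * α * (1 / |a| + 1 / b)) →
      (∀ t, ‖z₂ t‖ ≤ K * α * (1 / |a| + 1 / b)) →
      ∀ C : ℝ, (∀ t, ‖z₁ t - z₂ t‖ ≤ C) →
        ∀ t, ‖J z₁ t - J z₂ t‖ ≤ K * γ * (1 / |a| + 1 / b) * C) ∧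
    -- unique fixed point in `Ω₃`
    (∃ l : ℝ → X, Continuous l ∧ (∀ t, ‖l t‖ ≤ K * α * (1 / |a| + 1 / b)) ∧
      (∀ t, J l t = l t) ∧
      ∀ l' : ℝ → X, Continuous l' → (∀ t, ‖l' t‖ ≤ K * α * (1 / |a| + 1 / b)) →
        (∀ t, J l' t = l' t) → l' = l) := by
  have hD : NonuniformDichotomy T P h h' k k' μ ν K a b ε := ⟨hTcont, hPcont, hbound₁, hbound₂,
    hK.le, ha, hb, hpos, hmono, hd, hnn, hbot, kpos, kmono, kd, knn, ktop, μpos, νpos⟩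
  have hYs_cont : Continuous Ys := continuous_iff_continuousAt.2 fun t => (hYs t).continuousAt
  set w : (ℝ → X) → ℝ → X := fun z τ => f τ (Ys τ + z τ)
  have hJw z : J z = greenIntegral T P (w z) := funext (hJ z)
  have hw_cont z (hz : Continuous z) : Continuous (w z) :=
    hfcont.comp (continuous_id.prodMk (hYs_cont.add hz))
  set ρ : ℝ → ℝ := fun τ => min (h' τ * (h τ)⁻¹ * μ |τ| ^ (-ε)) (k' τ * (k τ)⁻¹ * ν |τ| ^ (-ε))
  have hw_bound (z : ℝ → X) τ : ‖w z τ‖ ≤ α * ρ τ := hfbd τ (Ys τ + z τ)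
  have hρ τ : 0 ≤ ρ τ :=
    le_min
      (mul_nonneg (mul_nonneg (hnn τ) (inv_nonneg.2 (hpos τ).le)) (Real.rpow_nonneg (μpos _).le _))
      (mul_nonneg (mul_nonneg (knn τ) (inv_nonneg.2 (kpos τ).le)) (Real.rpow_nonneg (νpos _).le _))
  have hmaps z t : ‖J z t‖ ≤ K * α * (1 / |a| + 1 / b) := by
    rw [hJw]
    exact hD.norm_greenIntegral_le hα.le (hw_bound z) t
  have hcontr z₁ z₂ (hz₁ : Continuous z₁) (hz₂ : Continuous z₂) C
      (hC : ∀ t, ‖z₁ t - z₂ t‖ ≤ C) t : ‖J z₁ t - J z₂ t‖ ≤ K * γ * (1 / |a| + 1 / b) * C := by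
    have hlip τ : ‖(w z₁ - w z₂) τ‖ ≤ γ * C * ρ τ :=
      calc ‖(w z₁ - w z₂) τ‖ ≤ γ * ρ τ * ‖z₁ τ - z₂ τ‖ := by
            simpa using hflip τ (Ys τ + z₁ τ) (Ys τ + z₂ τ)
        _ ≤ γ * ρ τ * C := mul_le_mul_of_nonneg_left (hC τ) (mul_nonneg hγ.le (hρ τ))
        _ = γ * C * ρ τ := by ring
    rw [hJw, hJw, ← hD.greenIntegral_sub hα.le (hw_bound z₂) (hw_cont z₁ hz₁) (hw_cont z₂ hz₂)
      (hw_bound z₁)]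
    calc _ ≤ K * (γ * C) * (1 / |a| + 1 / b) := hD.norm_greenIntegral_le
          (mul_nonneg hγ.le ((norm_nonneg _).trans (hC t))) hlip t
      _ = _ := by ring
  refine ⟨fun z _ _ => hmaps z, fun z₁ z₂ hz₁ hz₂ _ _ => hcontr z₁ z₂ hz₁ hz₂,
    exists_unique_fixedPoint_of_contraction_on_closedBall (by positivity) (by positivity) hsmall
      (fun z hz _ => hJw z ▸ hD.continuous_greenIntegral hα.le (hw_bound z) (hw_cont z hz))
      (fun z _ _ => hmaps z) fun z₁ z₂ hz₁ hz₂ _ _ => hcontr z₁ z₂ hz₁ hz₂⟩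

/-- Lemma `leldh`: the operator `J` maps the ball `Ω₃` of continuous functions
bounded by `Kα(1/|a|+1/b)` into itself, is a contraction with constant
`Kγ(1/|a|+1/b)`, and hence has a unique fixed point in `Ω₃`. -/
theorem stmt_13 {X : Type*} [NormedAddCommGroup X] [NormedSpace ℝ X] [CompleteSpace X]
    (h k μ ν : ℝ → ℝ) (h' k' : ℝ → ℝ)
    (hmono : Monotone h) (hpos : ∀ t, 0 < h t) (h0 : h 0 = 1)
    (htop : Tendsto h atTop atTop) (hbot : Tendsto h atBot (nhds 0))
    (kmono : Monotone k) (kpos : ∀ t, 0 < k t) (k0 : k 0 = 1)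
    (ktop : Tendsto k atTop atTop) (kbot : Tendsto k atBot (nhds 0))
    (μmono : Monotone μ) (μpos : ∀ t, 0 < μ t) (μ0 : μ 0 = 1)
    (μtop : Tendsto μ atTop atTop) (μbot : Tendsto μ atBot (nhds 0))
    (νmono : Monotone ν) (νpos : ∀ t, 0 < ν t) (ν0 : ν 0 = 1)
    (νtop : Tendsto ν atTop atTop) (νbot : Tendsto ν atBot (nhds 0))
    (hd : ∀ t, HasDerivAt h (h' t) t) (kd : ∀ t, HasDerivAt k (k' t) t)
    (hc : Continuous h') (kc : Continuous k')
    (hnn : ∀ t, 0 ≤ h' t) (knn : ∀ t, 0 ≤ k' t)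
    (K a b ε α γ : ℝ) (ha : a < 0) (hb : 0 < b) (hε : 0 ≤ ε) (hK : 0 < K)
    (hα : 0 < α) (hγ : 0 < γ)
    (A : ℝ → X →L[ℝ] X) (hA : Continuous A)
    (T : ℝ → ℝ → X →L[ℝ] X)
    (hTid : ∀ t, T t t = ContinuousLinearMap.id ℝ X)
    (hTderiv : ∀ (s : ℝ) (x : X), ∀ t, HasDerivAt (fun r => T r s x) (A t (T t s x)) t)
    (hTcont : Continuous fun p : ℝ × ℝ => T p.1 p.2)
    (P : ℝ → X →L[ℝ] X) (hPcont : Continuous P)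
    (hproj : ∀ t, P t ∘L P t = P t)
    (hcomm : ∀ t s, P t ∘L T t s = T t s ∘L P s)
    (hbound₁ : ∀ t s, s ≤ t →
      ‖T t s ∘L P s‖ ≤ K * (h t / h s) ^ a * μ |s| ^ ε)
    (hbound₂ : ∀ t s, t ≤ s →
      ‖T t s ∘L (ContinuousLinearMap.id ℝ X - P s)‖ ≤ K * (k s / k t) ^ (-b) * ν |s| ^ ε)
    (f : ℝ → X → X) (hfcont : Continuous fun p : ℝ × X => f p.1 p.2)
    (hfbd : ∀ t x, ‖f t x‖ ≤
      α * min (h' t * (h t)⁻¹ * μ |t| ^ (-ε)) (k' t * (k t)⁻¹ * ν |t| ^ (-ε)))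
    (hflip : ∀ t x₁ x₂, ‖f t x₁ - f t x₂‖ ≤
      γ * min (h' t * (h t)⁻¹ * μ |t| ^ (-ε)) (k' t * (k t)⁻¹ * ν |t| ^ (-ε)) * ‖x₁ - x₂‖)
    (hsmall : K * γ * (1 / |a| + 1 / b) < 1)
    (Ys : ℝ → X) (hYs : ∀ t, HasDerivAt Ys (A t (Ys t)) t)
    (J : (ℝ → X) → ℝ → X)
    (hJ : ∀ (z : ℝ → X) (t : ℝ),
      J z t = (∫ τ in Set.Iic t, (T t τ ∘L P τ) (f τ (Ys τ + z τ)))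
        - ∫ τ in Set.Ioi t, (T t τ ∘L (ContinuousLinearMap.id ℝ X - P τ)) (f τ (Ys τ + z τ))) :
    -- `J` maps `Ω₃` into itself
    (∀ z : ℝ → X, Continuous z → (∀ t, ‖z t‖ ≤ K * α * (1 / |a| + 1 / b)) →
      ∀ t, ‖J z t‖ ≤ K * α * (1 / |a| + 1 / b)) ∧
    -- `J` is a contraction with constant `Kγ(1/|a|+1/b)` in the sup norm
    (∀ z₁ z₂ : ℝ → X, Continuous z₁ → Continuous z₂ →
      (∀ t, ‖z₁ t‖ ≤ K * α * (1 / |a| + 1 / b)) →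
      (∀ t, ‖z₂ t‖ ≤ K * α * (1 / |a| + 1 / b)) →
      ∀ C : ℝ, (∀ t, ‖z₁ t - z₂ t‖ ≤ C) →
        ∀ t, ‖J z₁ t - J z₂ t‖ ≤ K * γ * (1 / |a| + 1 / b) * C) ∧
    -- unique fixed point in `Ω₃`
    (∃ l : ℝ → X, Continuous l ∧ (∀ t, ‖l t‖ ≤ K * α * (1 / |a| + 1 / b)) ∧
      (∀ t, J l t = l t) ∧
      ∀ l' : ℝ → X, Continuous l' → (∀ t, ‖l' t‖ ≤ K * α * (1 / |a| + 1 / b)) →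
        (∀ t, J l' t = l' t) → l' = l) :=
  stmt_13_general h k μ ν h' k' hmono hpos hbot kmono kpos ktop μpos νpos hd kd hnn knn K a b ε α γ
    ha hb hK hα hγ A T hTcont P hPcont hbound₁ hbound₂ f hfcont hfbd hflip hsmall Ys hYs J hJ
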